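/- arXiv:2511.13437 — 5 statements merged into one kernel-verified Lean document; each statement's English description precedes it below -/
import Mathlib

section
/- Let F be a polynomial over ℂ of degree m ≥ 2 that is pre-simple, i.e., F has exactly m−1 distinct critical values in ℂ. Then F is indecomposable: if F = f₁ ∘ f₂ for rational maps f₁, f₂, then deg f₁ = 1 or deg f₂ = 1. -/
/-!
Write `f₁ = p / q`, `f₂ = r / s` in lowest terms and `N = deg f₁`. Clearing denominators,
`F · s^N q(r/s) = s^N p(r/s)`. The factor `s^N q(r/s)` has no zeros: at a zero `α` with
`s(α) ≠ 0`, `r(α)/s(α)` would be a common zero of `p` and `q`, and at a zero of `s` the top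
coefficients of `p` and `q` would both vanish. So it is a nonzero constant `c₀`. If `q` has a root
`w`, the same argument shows that `r - w s` has no zeros, so `f₂ = w + c / s` and
`F = h ∘ s` with `h(y) = c₀⁻¹ y^N p(w + c/y)`, a polynomial of degree `N` since `p(w) ≠ 0`.
Otherwise `q = 1`, which forces `s = 1` and `F = c₀⁻¹ p ∘ r`. Either way `F = h ∘ g` with
polynomials of degrees `deg f₁` and `deg f₂`.

The critical values of `h ∘ g` are images of critical points of `h` under `h` or of critical
points of `g` under `h ∘ g`, so there are at most `(deg h - 1) + (deg g - 1) < deg h · deg g - 1`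
of them when both degrees are at least `2`.
-/

open Polynomial

/-- Degree of a rational map, as max of degrees of numerator and denominator. -/
noncomputable def ratDeg (f : RatFunc ℂ) : ℕ := max f.num.natDegree f.denom.natDegree

/-- Composition of rational maps: `f ∘ g` obtained by substituting `g` into
numerator and denominator of `f`. -/
noncomputable def ratComp (f g : RatFunc ℂ) : RatFunc ℂ :=
  Polynomial.aeval g f.num / Polynomial.aeval g f.denom

/-- The set of (finite) critical values of a polynomial over ℂ. -/
def critVals (F : Polynomial ℂ) : Set ℂ :=
  {v : ℂ | ∃ c : ℂ, (Polynomial.derivative F).eval c = 0 ∧ F.eval c = v}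

namespace Polynomial

section CommRing

variable {R : Type*} [CommRing R]

/-- `homSubst p r s N = s ^ N * p (r / s)`, the substitution of `r / s` into `p` with the
denominator cleared to the power `N ≥ natDegree p`. -/
noncomputable def homSubst (p r s : R[X]) (N : ℕ) : R[X] :=
  ∑ i ∈ Finset.range (N + 1), C (p.coeff i) * r ^ i * s ^ (N - i)

theorem homSubst_comp (p r s g : R[X]) (N : ℕ) :
    (homSubst p r s N).comp g = homSubst p (r.comp g) (s.comp g) N := by
  simp only [homSubst, sum_comp, mul_comp, pow_comp, C_comp]

theorem homSubst_zero (p r s : R[X]) : homSubst p r s 0 = C (p.coeff 0) := by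
  simp [homSubst]

theorem homSubst_one_left (r s : R[X]) (N : ℕ) : homSubst 1 r s N = s ^ N := by
  rw [homSubst, Finset.sum_eq_single 0 (fun i _ hi => by simp [coeff_one, hi]) (by simp)]
  simp

theorem homSubst_one_right {p : R[X]} {N : ℕ} (hp : p.natDegree ≤ N) (r : R[X]) :
    homSubst p r 1 N = p.comp r := by
  simp only [homSubst, one_pow, mul_one, comp, eval₂_eq_sum_range' C (Nat.lt_succ_of_le hp)]

theorem eval_homSubst_of_eval_eq_mul {p : R[X]} {N : ℕ} (hp : p.natDegree ≤ N) {r s : R[X]}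
    {α w : R} (hα : r.eval α = w * s.eval α) :
    (homSubst p r s N).eval α = p.eval w * s.eval α ^ N := by
  rw [homSubst, eval_finsetSum, eval_eq_sum_range' (Nat.lt_succ_of_le hp), Finset.sum_mul]
  refine Finset.sum_congr rfl fun i hi => ?_
  have hi : i ≤ N := Nat.lt_succ_iff.mp (Finset.mem_range.mp hi)
  rw [eval_mul, eval_mul, eval_C, eval_pow, eval_pow, hα, mul_pow, ← Nat.sub_add_cancel hi,
    pow_add, Nat.add_sub_cancel]
  ring

theorem eval_homSubst_of_eval_eq_zero (p r : R[X]) {s : R[X]} (N : ℕ) {α : R}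
    (hα : s.eval α = 0) : (homSubst p r s N).eval α = p.coeff N * r.eval α ^ N := by
  rw [homSubst, eval_finsetSum, Finset.sum_eq_single N]
  · simp
  · intro i hi hne
    have : N - i ≠ 0 := by have := Finset.mem_range.mp hi; omega
    simp [hα, zero_pow this]
  · simp

theorem coeff_homSubst_linear_X {p : R[X]} {N : ℕ} (hp : p.natDegree ≤ N) (u v : R) :
    (homSubst p (C u * X + C v) X N).coeff N = p.eval u := by
  rw [homSubst, finsetSum_coeff, eval_eq_sum_range' (Nat.lt_succ_of_le hp)]
  refine Finset.sum_congr rfl fun i hi => ?_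
  have hi : i ≤ N := Nat.lt_succ_iff.mp (Finset.mem_range.mp hi)
  have hpow : ((C u * X + C v) ^ i).coeff i = (C u * X + C v).coeff 1 ^ i := by
    simpa using coeff_pow_of_natDegree_le (m := i) (natDegree_linear_le (a := u) (b := v))
  rw [coeff_mul_X_pow', if_pos (Nat.sub_le N i), Nat.sub_sub_self hi, coeff_C_mul, hpow]
  simp

theorem homSubst_eq_comp_of_eq_C_mul_add_C {r s : R[X]} {w c : R} (hr : r = C w * s + C c)
    (p : R[X]) (N : ℕ) : homSubst p r s N = (homSubst p (C w * X + C c) X N).comp s := by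
  simp [homSubst_comp, hr]

theorem natDegree_homSubst_linear_X {p : R[X]} {N : ℕ} (hp : p.natDegree ≤ N) (u v : R)
    (hpu : p.eval u ≠ 0) : (homSubst p (C u * X + C v) X N).natDegree = N := by
  refine le_antisymm (natDegree_sum_le_of_forall_le _ _ fun i hi => ?_)
    (le_natDegree_of_ne_zero (by rwa [coeff_homSubst_linear_X hp]))
  have hi : i ≤ N := Nat.lt_succ_iff.mp (Finset.mem_range.mp hi)
  have hlin : (C u * X + C v).natDegree ≤ 1 := natDegree_linear_le
  calc (C (p.coeff i) * (C u * X + C v) ^ i * X ^ (N - i)).natDegree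
      ≤ i * 1 + (N - i) :=
        natDegree_mul_le_of_le ((natDegree_C_mul_le _ _).trans (natDegree_pow_le_of_le i hlin))
          (natDegree_X_pow_le _)
    _ = N := by omega

end CommRing

section Field

variable {K : Type*} [Field K]

theorem aeval_div_mul_pow_eq_homSubst {p : K[X]} {N : ℕ} (hp : p.natDegree ≤ N) (r : K[X])
    {s : K[X]} (hs : s ≠ 0) :
    aeval (algebraMap K[X] (RatFunc K) r / algebraMap K[X] (RatFunc K) s) p
        * algebraMap K[X] (RatFunc K) s ^ N = algebraMap K[X] (RatFunc K) (homSubst p r s N) := by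
  have hs' : algebraMap K[X] (RatFunc K) s ≠ 0 := RatFunc.algebraMap_ne_zero hs
  rw [aeval_eq_sum_range' (Nat.lt_succ_of_le hp), homSubst, map_sum, Finset.sum_mul]
  refine Finset.sum_congr rfl fun i hi => ?_
  have hi : i ≤ N := Nat.lt_succ_iff.mp (Finset.mem_range.mp hi)
  rw [← Nat.sub_add_cancel hi, pow_add, Nat.add_sub_cancel, Algebra.smul_def,
    IsScalarTower.algebraMap_apply K K[X] (RatFunc K), algebraMap_eq, div_pow, map_mul, map_mul,
    map_pow, map_pow]
  field_simp

theorem eval_ne_zero_of_isCoprime {p q : K[X]} (h : IsCoprime p q) {x : K} (hq : q.eval x = 0) :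
    p.eval x ≠ 0 := by
  simpa [hq] using aeval_ne_zero_of_isCoprime h x

theorem coeff_max_natDegree_ne_zero {p q : K[X]} (hp : p ≠ 0) (hq : q ≠ 0) :
    p.coeff (max p.natDegree q.natDegree) ≠ 0 ∨ q.coeff (max p.natDegree q.natDegree) ≠ 0 := by
  rcases max_choice p.natDegree q.natDegree with h | h <;> rw [h]
  exacts [Or.inl (leadingCoeff_ne_zero.mpr hp), Or.inr (leadingCoeff_ne_zero.mpr hq)]

theorem eval_homSubst_ne_zero {F p q r s : K[X]} {N : ℕ} (hpq : IsCoprime p q)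
    (hrs : IsCoprime r s) (hpN : p.natDegree ≤ N) (hqN : q.natDegree ≤ N)
    (hN : p.coeff N ≠ 0 ∨ q.coeff N ≠ 0) (hFPQ : F * homSubst q r s N = homSubst p r s N)
    (α : K) : (homSubst q r s N).eval α ≠ 0 := by
  intro hQ
  have hP : (homSubst p r s N).eval α = 0 := by rw [← hFPQ, eval_mul, hQ, mul_zero]
  by_cases hs : s.eval α = 0
  · have hr : r.eval α ^ N ≠ 0 := pow_ne_zero _ (eval_ne_zero_of_isCoprime hrs hs)
    rw [eval_homSubst_of_eval_eq_zero _ _ _ hs] at hQ hP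
    rcases hN with hN | hN
    exacts [hN ((mul_eq_zero.mp hP).resolve_right hr), hN ((mul_eq_zero.mp hQ).resolve_right hr)]
  · have hrs' : r.eval α = (r.eval α / s.eval α) * s.eval α := (div_mul_cancel₀ _ hs).symm
    rw [eval_homSubst_of_eval_eq_mul hqN hrs'] at hQ
    rw [eval_homSubst_of_eval_eq_mul hpN hrs'] at hP
    have hq := (mul_eq_zero.mp hQ).resolve_right (pow_ne_zero _ hs)
    exact eval_ne_zero_of_isCoprime hpq hq ((mul_eq_zero.mp hP).resolve_right (pow_ne_zero _ hs))

theorem eq_C_of_forall_eval_ne_zero [IsAlgClosed K] {p : K[X]} (h : ∀ x, p.eval x ≠ 0) :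
    p = C (p.coeff 0) :=
  eq_C_of_degree_eq_zero <| by
    by_contra hp
    obtain ⟨x, hx⟩ := IsAlgClosed.exists_root p hp
    exact h x hx

theorem exists_homSubst_eq_C [IsAlgClosed K] {F p q r s : K[X]} (hpq : IsCoprime p q)
    (hrs : IsCoprime r s) (hp : p ≠ 0) (hq : q ≠ 0)
    (hFPQ : F * homSubst q r s (max p.natDegree q.natDegree)
      = homSubst p r s (max p.natDegree q.natDegree)) :
    ∃ c₀ ≠ 0, homSubst q r s (max p.natDegree q.natDegree) = C c₀ ∧
      F = C c₀⁻¹ * homSubst p r s (max p.natDegree q.natDegree) := by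
  have hQ := eval_homSubst_ne_zero hpq hrs (le_max_left _ _) (le_max_right _ _)
    (coeff_max_natDegree_ne_zero hp hq) hFPQ
  have hQC := eq_C_of_forall_eval_ne_zero hQ
  set c₀ := (homSubst q r s (max p.natDegree q.natDegree)).coeff 0
  have hc₀ : c₀ ≠ 0 := by simpa [hQC] using hQ 0
  refine ⟨c₀, hc₀, hQC, ?_⟩
  rw [← hFPQ, hQC, mul_left_comm, ← C_mul, inv_mul_cancel₀ hc₀, C_1, mul_one]

theorem exists_eq_C_mul_add_C_of_isRoot [IsAlgClosed K] {q r s : K[X]} {N : ℕ}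
    (hqN : q.natDegree ≤ N) {c₀ : K} (hc₀ : c₀ ≠ 0) (hQC : homSubst q r s N = C c₀) {w : K}
    (hw : q.IsRoot w) : ∃ c, r = C w * s + C c := by
  have hlin : ∀ α, (r - C w * s).eval α ≠ 0 := by
    intro α hα
    rw [eval_sub, eval_mul, eval_C, sub_eq_zero] at hα
    have hQα := congrArg (eval α) hQC
    rw [eval_homSubst_of_eval_eq_mul hqN hα, hw.eq_zero, zero_mul, eval_C] at hQα
    exact hc₀ hQα.symm
  exact ⟨_, by rw [← eq_C_of_forall_eval_ne_zero hlin]; ring⟩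

theorem exists_comp_eq_of_mul_homSubst_eq [IsAlgClosed K] {F p q r s : K[X]}
    (hpq : IsCoprime p q) (hrs : IsCoprime r s) (hp : p ≠ 0) (hq : q.Monic) (hs : s.Monic)
    (hF : 0 < F.natDegree)
    (hFPQ : F * homSubst q r s (max p.natDegree q.natDegree)
      = homSubst p r s (max p.natDegree q.natDegree)) :
    ∃ h g : K[X], F = h.comp g ∧ h.natDegree = max p.natDegree q.natDegree ∧
      g.natDegree = max r.natDegree s.natDegree := by
  obtain ⟨c₀, hc₀, hQC, hFP⟩ := exists_homSubst_eq_C hpq hrs hp hq.ne_zero hFPQ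
  set N := max p.natDegree q.natDegree with hN
  have hpN : p.natDegree ≤ N := le_max_left _ _
  by_cases hroot : ∃ w, q.IsRoot w
  · obtain ⟨w, hw⟩ := hroot
    obtain ⟨c, hr⟩ := exists_eq_C_mul_add_C_of_isRoot (le_max_right _ _) hc₀ hQC hw
    refine ⟨C c₀⁻¹ * homSubst p (C w * X + C c) X N, s, ?_, ?_, ?_⟩
    · rw [hFP, mul_comp, C_comp, ← homSubst_eq_comp_of_eq_C_mul_add_C hr]
    · rw [natDegree_C_mul (inv_ne_zero hc₀),
        natDegree_homSubst_linear_X hpN _ _ (eval_ne_zero_of_isCoprime hpq hw)]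
    · rw [max_eq_right (by rw [hr, natDegree_add_C]; exact natDegree_C_mul_le w s)]
  · push Not at hroot
    have hq1 : q = 1 := eq_one_of_monic_natDegree_zero hq <| by
      rw [eq_C_of_forall_eval_ne_zero hroot, natDegree_C]
    have hN0 : N ≠ 0 := by
      rintro h0
      rw [hFP, h0, homSubst_zero, ← C_mul, natDegree_C] at hF
      exact lt_irrefl 0 hF
    have hs1 : s = 1 := eq_one_of_monic_natDegree_zero hs <| by
      have := congrArg natDegree hQC
      rw [hq1, homSubst_one_left, natDegree_pow, natDegree_C] at this
      exact (mul_eq_zero.mp this).resolve_left hN0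
    refine ⟨C c₀⁻¹ * p, r, ?_, ?_, ?_⟩
    · rw [hFP, hs1, homSubst_one_right hpN, mul_comp, C_comp]
    · rw [natDegree_C_mul (inv_ne_zero hc₀), hN, hq1, natDegree_one, max_zero]
    · rw [hs1, natDegree_one, max_zero]

end Field

end Polynomial

theorem exists_comp_eq_of_algebraMap_eq_ratComp {F : ℂ[X]} (hF : 0 < F.natDegree)
    {f₁ f₂ : RatFunc ℂ} (hcomp : algebraMap ℂ[X] (RatFunc ℂ) F = ratComp f₁ f₂) :
    ∃ h g : ℂ[X], F = h.comp g ∧ h.natDegree = ratDeg f₁ ∧ g.natDegree = ratDeg f₂ := by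
  have hAF : algebraMap ℂ[X] (RatFunc ℂ) F ≠ 0 :=
    RatFunc.algebraMap_ne_zero (ne_zero_of_natDegree_gt hF)
  have hq : aeval f₂ f₁.denom ≠ 0 := by
    intro h
    rw [hcomp, ratComp, h, div_zero] at hAF
    exact hAF rfl
  have hclear : algebraMap ℂ[X] (RatFunc ℂ) F * aeval f₂ f₁.denom = aeval f₂ f₁.num := by
    rw [hcomp, ratComp, div_mul_cancel₀ _ hq]
  have hp : f₁.num ≠ 0 := by
    intro h
    rw [h, map_zero] at hclear
    exact mul_ne_zero hAF hq hclear
  refine exists_comp_eq_of_mul_homSubst_eq (RatFunc.isCoprime_num_denom f₁)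
    (RatFunc.isCoprime_num_denom f₂) hp (RatFunc.monic_denom f₁) (RatFunc.monic_denom f₂) hF
    (RatFunc.algebraMap_injective ℂ ?_)
  rw [map_mul, ← aeval_div_mul_pow_eq_homSubst (le_max_left _ _) _ (RatFunc.denom_ne_zero f₂),
    ← aeval_div_mul_pow_eq_homSubst (le_max_right _ _) _ (RatFunc.denom_ne_zero f₂),
    RatFunc.num_div_denom, ← mul_assoc, hclear]

theorem card_image_roots_toFinset_le {R S : Type*} [CommRing R] [IsDomain R] [DecidableEq R]
    [DecidableEq S] (f : R → S) (p : R[X]) :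
    (p.roots.toFinset.image f).card ≤ p.natDegree :=
  Finset.card_image_le.trans (p.roots.toFinset_card_le.trans p.card_roots')

theorem critVals_comp_subset {h g : ℂ[X]} (hh : derivative h ≠ 0) (hg : derivative g ≠ 0) :
    critVals (h.comp g) ⊆ ↑((derivative h).roots.toFinset.image h.eval
      ∪ (derivative g).roots.toFinset.image (h.comp g).eval) := by
  rintro _ ⟨c, hc, rfl⟩
  rw [derivative_comp, eval_mul, eval_comp, mul_eq_zero] at hc
  rw [Finset.coe_union, Finset.coe_image, Finset.coe_image]
  rcases hc with hc | hc
  · exact Or.inr ⟨c, by simpa [hg] using hc, rfl⟩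
  · exact Or.inl ⟨g.eval c, by simpa [hh] using hc, (eval_comp ..).symm⟩

theorem ncard_critVals_comp_lt {h g : ℂ[X]} (hh : 2 ≤ h.natDegree) (hg : 2 ≤ g.natDegree) :
    (critVals (h.comp g)).ncard < (h.comp g).natDegree - 1 := by
  have hh' : derivative h ≠ 0 := by rw [Ne, derivative_eq_zero]; omega
  have hg' : derivative g ≠ 0 := by rw [Ne, derivative_eq_zero]; omega
  have hmul := Nat.add_le_mul hh hg
  calc (critVals (h.comp g)).ncard
      ≤ ((derivative h).roots.toFinset.image h.eval
          ∪ (derivative g).roots.toFinset.image (h.comp g).eval).card := by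
        rw [← Set.ncard_coe_finset]
        exact Set.ncard_le_ncard (critVals_comp_subset hh' hg') (Finset.finite_toSet _)
    _ ≤ (derivative h).natDegree + (derivative g).natDegree :=
        (Finset.card_union_le _ _).trans (add_le_add (card_image_roots_toFinset_le _ _)
          (card_image_roots_toFinset_le _ _))
    _ ≤ (h.natDegree - 1) + (g.natDegree - 1) :=
        add_le_add (natDegree_derivative_le h) (natDegree_derivative_le g)
    _ < (h.comp g).natDegree - 1 := by rw [natDegree_comp]; omega

/-- A pre-simple polynomial of degree `m ≥ 2` is indecomposable as a rational map. -/
theorem stmt0 (m : ℕ) (hm : 2 ≤ m) (F : Polynomial ℂ) (hdeg : F.natDegree = m)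
    (hps : (critVals F).ncard = m - 1)
    (f₁ f₂ : RatFunc ℂ)
    (hcomp : algebraMap (Polynomial ℂ) (RatFunc ℂ) F = ratComp f₁ f₂) :
    ratDeg f₁ = 1 ∨ ratDeg f₂ = 1 := by
  obtain ⟨h, g, rfl, hh, hg⟩ := exists_comp_eq_of_algebraMap_eq_ratComp (by omega) hcomp
  rw [← hh, ← hg]
  by_contra! hne
  rw [natDegree_comp] at hdeg
  have hh0 : h.natDegree ≠ 0 := left_ne_zero_of_mul (by omega : h.natDegree * g.natDegree ≠ 0)
  have hg0 : g.natDegree ≠ 0 := right_ne_zero_of_mul (by omega : h.natDegree * g.natDegree ≠ 0)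
  have hlt := ncard_critVals_comp_lt (h := h) (g := g) (by omega) (by omega)
  rw [hps, natDegree_comp, hdeg] at hlt
  exact lt_irrefl _ hlt
end

section
/- Let F = f₁ ∘ f₂ where f₁, f₂ ∈ ℂ[z] are polynomials of degrees m₁, m₂ ≥ 2. Then the number of distinct critical values of F in ℂ is at most (m₁ − 1) + (m₂ − 1), which is strictly less than m₁m₂ − 1; in particular F is not pre-simple. -/
open Polynomial

/-- A composition of two polynomials of degrees `m₁, m₂ ≥ 2` has at most
`(m₁ - 1) + (m₂ - 1) < m₁ * m₂ - 1` distinct critical values; in particular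
it is not pre-simple. -/
theorem stmt1 (m₁ m₂ : ℕ) (h₁ : 2 ≤ m₁) (h₂ : 2 ≤ m₂)
    (f₁ f₂ : Polynomial ℂ) (hd₁ : f₁.natDegree = m₁) (hd₂ : f₂.natDegree = m₂) :
    (critVals (f₁.comp f₂)).ncard ≤ (m₁ - 1) + (m₂ - 1) ∧
    (m₁ - 1) + (m₂ - 1) < m₁ * m₂ - 1 ∧
    (critVals (f₁.comp f₂)).ncard ≠ m₁ * m₂ - 1 := by
  set F := f₁.comp f₂ with hF
  have hD1 : derivative f₁ ≠ 0 := fun h => by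
    have := natDegree_eq_zero_of_derivative_eq_zero h; omega
  have hD2 : derivative f₂ ≠ 0 := fun h => by
    have := natDegree_eq_zero_of_derivative_eq_zero h; omega
  set S : Finset ℂ := ((derivative f₁).roots.toFinset.image f₁.eval) ∪
    ((derivative f₂).roots.toFinset.image F.eval) with hS
  have hsub : critVals F ⊆ ↑S := by
    rintro v ⟨c, hc, rfl⟩
    rw [hF, derivative_comp, eval_mul, eval_comp] at hc
    rcases mul_eq_zero.mp hc with h | h
    case inr => 
      apply Finset.mem_coe.mpr
      apply Finset.mem_union_left
      apply Finset.mem_image.mpr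
      exact ⟨f₂.eval c, Multiset.mem_toFinset.mpr ((mem_roots hD1).mpr h),
        by rw [hF, eval_comp]⟩
    case inl =>
      apply Finset.mem_coe.mpr
      apply Finset.mem_union_right
      apply Finset.mem_image.mpr
      exact ⟨c, Multiset.mem_toFinset.mpr ((mem_roots hD2).mpr h), rfl⟩
  have hb1 : ((derivative f₁).roots.toFinset.image f₁.eval).card ≤ m₁ - 1 := by
    calc _ ≤ (derivative f₁).roots.toFinset.card := Finset.card_image_le
    _ ≤ Multiset.card (derivative f₁).roots := (derivative f₁).roots.toFinset_card_le
    _ ≤ (derivative f₁).natDegree := card_roots' _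
    _ ≤ f₁.natDegree - 1 := natDegree_derivative_le _
    _ = m₁ - 1 := by rw [hd₁]
  have hb2 : ((derivative f₂).roots.toFinset.image F.eval).card ≤ m₂ - 1 := by
    calc _ ≤ (derivative f₂).roots.toFinset.card := Finset.card_image_le
    _ ≤ Multiset.card (derivative f₂).roots := (derivative f₂).roots.toFinset_card_le
    _ ≤ (derivative f₂).natDegree := card_roots' _
    _ ≤ f₂.natDegree - 1 := natDegree_derivative_le _
    _ = m₂ - 1 := by rw [hd₂]
  have hcard : (critVals F).ncard ≤ (m₁ - 1) + (m₂ - 1) := by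
    calc (critVals F).ncard ≤ (↑S : Set ℂ).ncard :=
          Set.ncard_le_ncard hsub S.finite_toSet
    _ = S.card := by rw [Set.ncard_coe_finset]
    _ ≤ _ + _ := Finset.card_union_le _ _
    _ ≤ (m₁ - 1) + (m₂ - 1) := Nat.add_le_add hb1 hb2
  have harith : (m₁ - 1) + (m₂ - 1) < m₁ * m₂ - 1 := by
    have : m₁ + m₂ ≤ m₁ * m₂ := by nlinarith
    omega
  exact ⟨hcard, harith, by omega⟩
end

section
/- Let c ∈ ℂ with c ≠ 0 and let n ≥ 1. If σ(z) = az + b is an affine map with φ_c^{∘n} ∘ σ = φ_c^{∘n} (where φ_c(z) = z² + c), then σ(z) = z or σ(z) = −z. That is, Σ(φ_c^{∘n}) = {z, −z} for all n ≥ 1. -/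
open Polynomial

/-- The `n`-th compositional iterate of a polynomial. -/
noncomputable def polyIter (φ : Polynomial ℂ) (n : ℕ) : Polynomial ℂ :=
  (fun q => φ.comp q)^[n] Polynomial.X

/-!
Write `Pₙ = φ_c^{∘n}`, so `Pₙ₊₁ = Pₙ² + c`. If `Pₙ₊₁ ∘ σ = Pₙ₊₁`, then `(Pₙ ∘ σ)² = Pₙ²`, hence
`Pₙ ∘ σ = ± Pₙ`. The sign `+` is handled by induction, ending at `P₀ ∘ σ = σ = X`. The sign `-`
gives `σ = -X` when `n = 0`, and is impossible when `n = m + 1`: it says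
`(Pₘ ∘ σ)² + Pₘ² = -2c`, and factoring the left side as `(Pₘ ∘ σ + i Pₘ)(Pₘ ∘ σ - i Pₘ)` forces
both factors, hence their difference `2i Pₘ`, to be constant.
-/

lemma sq_add_sq_ne_C {K : Type*} [Field K] [NeZero (2 : K)] {i : K} (hi : i ^ 2 = -1)
    {c : K} (hc : c ≠ 0) (u : K[X]) {Q : K[X]} (hQ : 0 < Q.natDegree) :
    u ^ 2 + Q ^ 2 ≠ C c := by
  intro h
  have hI : C i ^ 2 = -1 := by rw [← C_pow, hi, C_neg, C_1]
  have hfactor : (u + C i * Q) * (u - C i * Q) = C c := by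
    rw [← h]; linear_combination (-Q ^ 2) * hI
  have hprod : (u + C i * Q) * (u - C i * Q) ≠ 0 := hfactor ▸ C_ne_zero.mpr hc
  have hplus := left_ne_zero_of_mul hprod
  have hminus := right_ne_zero_of_mul hprod
  have hdeg := congrArg natDegree hfactor
  rw [natDegree_mul hplus hminus, natDegree_C, Nat.add_eq_zero_iff] at hdeg
  have h2i : (2 : K) * i ≠ 0 := mul_ne_zero two_ne_zero (by rintro rfl; simp at hi)
  have hdiff : C (2 * i) * Q = (u + C i * Q) - (u - C i * Q) := by
    rw [C_mul, C_ofNat]; ring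
  have := natDegree_sub_le (u + C i * Q) (u - C i * Q)
  rw [← hdiff, natDegree_C_mul h2i, hdeg.1, hdeg.2] at this
  omega

lemma polyIter_zero (φ : ℂ[X]) : polyIter φ 0 = X := rfl

lemma polyIter_succ' (φ : ℂ[X]) (n : ℕ) : polyIter φ (n + 1) = (polyIter φ n).comp φ := by
  simp only [polyIter, Function.iterate_succ_apply]
  induction n with
  | zero => simp
  | succ n ih => rw [Function.iterate_succ_apply', Function.iterate_succ_apply', ih, comp_assoc]

lemma natDegree_polyIter (φ : ℂ[X]) (n : ℕ) : (polyIter φ n).natDegree = φ.natDegree ^ n := by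
  simp [polyIter]

lemma polyIter_quadratic_succ (c : ℂ) (n : ℕ) :
    polyIter (X ^ 2 + C c) (n + 1) = polyIter (X ^ 2 + C c) n ^ 2 + C c := by
  simp [polyIter, Function.iterate_succ_apply']

lemma polyIter_quadratic_comp_neg_X (c : ℂ) {n : ℕ} (hn : 1 ≤ n) :
    (polyIter (X ^ 2 + C c) n).comp (-X) = polyIter (X ^ 2 + C c) n := by
  obtain ⟨m, rfl⟩ := Nat.exists_eq_add_of_le' hn
  simp [polyIter_succ', comp_assoc]

lemma eq_X_or_eq_neg_X_of_polyIter_quadratic_comp {c : ℂ} (hc : c ≠ 0) (n : ℕ) {σ : ℂ[X]}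
    (hσ : (polyIter (X ^ 2 + C c) n).comp σ = polyIter (X ^ 2 + C c) n) : σ = X ∨ σ = -X := by
  induction n with
  | zero => exact .inl (by simpa [polyIter_zero] using hσ)
  | succ n ih =>
    simp only [polyIter_quadratic_succ, add_comp, pow_comp, C_comp, add_left_inj,
      sq_eq_sq_iff_eq_or_eq_neg] at hσ
    rcases hσ with hσ | hσ
    · exact ih hσ
    cases n with
    | zero => exact .inr (by simpa [polyIter_zero] using hσ)
    | succ m =>
      have hm : 0 < (polyIter (X ^ 2 + C c) m).natDegree := by
        rw [natDegree_polyIter, natDegree_X_pow_add_C]; positivity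
      refine absurd ?_ (sq_add_sq_ne_C Complex.I_sq (neg_ne_zero.mpr (mul_ne_zero two_ne_zero hc))
        ((polyIter (X ^ 2 + C c) m).comp σ) hm)
      simp only [polyIter_quadratic_succ, add_comp, pow_comp, C_comp] at hσ
      rw [C_neg, C_mul, C_ofNat]
      linear_combination hσ

/-- For `c ≠ 0` and `n ≥ 1`, the group of affine symmetries of `φ_c^{∘n}`
is exactly `{z, -z}`. -/
theorem stmt5 (c : ℂ) (hc : c ≠ 0) (n : ℕ) (hn : 1 ≤ n) :
    {σ : Polynomial ℂ | (∃ a b : ℂ, a ≠ 0 ∧ σ = C a * X + C b) ∧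
        (polyIter (X ^ 2 + C c) n).comp σ = polyIter (X ^ 2 + C c) n}
      = {X, -X} := by
  ext σ
  constructor
  · rintro ⟨-, hσ⟩
    exact eq_X_or_eq_neg_X_of_polyIter_quadratic_comp hc n hσ
  · rintro (rfl | rfl)
    · exact ⟨⟨1, 0, one_ne_zero, by simp⟩, comp_X⟩
    · exact ⟨⟨-1, 0, by norm_num, by simp⟩, polyIter_quadratic_comp_neg_X c hn⟩
end

section
/- Let c ∈ ℂ with c ≠ 0 and n ≥ 2. There is no affine map σ(z) = az + b with φ_c^{∘(n−1)} = −φ_c^{∘(n−1)} ∘ σ, where φ_c(z) = z² + c. (Comparing the coefficients of z^{2^{n−1}}, z^{2^{n−1}−1}, z^{2^{n−1}−2} yields a^{2^{n−1}} = −1, b = 0, and a^{2^{n−1}−2} = −1, which is contradictory.) -/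
open Polynomial Finset

lemma coeff_linear_pow (a b : ℂ) (m j : ℕ) :
    ((C a * X + C b) ^ m).coeff j = (m.choose j : ℂ) * a ^ j * b ^ (m - j) := by
  rw [Commute.add_pow (Commute.all _ _), finset_sum_coeff]
  have hterm : ∀ i, ((C a * X) ^ i * C b ^ (m - i) * ((m.choose i : ℕ) : ℂ[X])).coeff j
      = if j = i then (m.choose i : ℂ) * a ^ i * b ^ (m - i) else 0 := by
    intro i
    have : (C a * X) ^ i * C b ^ (m - i) * ((m.choose i : ℕ) : ℂ[X])
        = C ((m.choose i : ℂ) * a ^ i * b ^ (m - i)) * X ^ i := by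
      simp only [mul_pow, ← C_pow, ← C_eq_natCast, ← C_mul]
      rw [C_mul, C_mul]; ring
    rw [this, coeff_C_mul, coeff_X_pow, mul_ite, mul_one, mul_zero]
  simp only [hterm]
  rw [Finset.sum_ite_eq (range (m + 1)) j (fun i => (m.choose i : ℂ) * a ^ i * b ^ (m - i))]
  by_cases h : j ∈ range (m + 1)
  · rw [if_pos h]
  · rw [if_neg h]
    rw [Finset.mem_range, not_lt] at h
    rw [Nat.choose_eq_zero_of_lt (by omega)]
    simp

lemma coeff_sq (P : ℂ[X]) (n : ℕ) :
    (P * P).coeff n = ∑ i ∈ range (n + 1), P.coeff i * P.coeff (n - i) := by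
  rw [coeff_mul, Finset.Nat.sum_antidiagonal_eq_sum_range_succ_mk]

lemma polyIter_succ (φ : Polynomial ℂ) (k : ℕ) :
    polyIter φ (k + 1) = φ.comp (polyIter φ k) := by
  unfold polyIter
  rw [Function.iterate_succ_apply']

lemma polyIter_sq (c : ℂ) (k : ℕ) :
    polyIter (X ^ 2 + C c) (k + 1) = polyIter (X ^ 2 + C c) k * polyIter (X ^ 2 + C c) k + C c := by
  rw [polyIter_succ]
  simp [add_comp, pow_comp, sq]

lemma iter_facts (c : ℂ) (j : ℕ) :
    (polyIter (X ^ 2 + C c) (j + 1)).Monic ∧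
    (polyIter (X ^ 2 + C c) (j + 1)).natDegree = 2 ^ (j + 1) ∧
    (polyIter (X ^ 2 + C c) (j + 1)).coeff (2 ^ (j + 1) - 1) = 0 ∧
    (polyIter (X ^ 2 + C c) (j + 1)).coeff (2 ^ (j + 1) - 2) = 2 ^ j * c := by
  induction j with
  | zero =>
    have h1 : polyIter (X ^ 2 + C c) 1 = X ^ 2 + C c := by
      rw [polyIter_sq]
      simp [polyIter, sq]
    rw [h1]
    refine ⟨?_, ?_, ?_, ?_⟩
    · exact monic_X_pow_add (lt_of_le_of_lt degree_C_le (by norm_num))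
    · compute_degree!
    · simp [coeff_add, coeff_X_pow, coeff_C]
    · simp [coeff_add, coeff_X_pow, coeff_C]
  | succ j ih =>
    obtain ⟨hmon, hdeg, h1, h2⟩ := ih
    set P := polyIter (X ^ 2 + C c) (j + 1) with hP
    -- write 2^(j+1) = m + 2
    obtain ⟨m, hm⟩ : ∃ m, 2 ^ (j + 1) = m + 2 := by
      refine ⟨2 ^ (j + 1) - 2, ?_⟩
      have : 2 ≤ 2 ^ (j + 1) := by
        calc 2 = 2 ^ 1 := rfl
        _ ≤ 2 ^ (j + 1) := Nat.pow_le_pow_right (by norm_num) (by omega)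
      omega
    have hdeg' : P.natDegree = m + 2 := by rw [hdeg, hm]
    have hc2 : P.coeff (m + 2) = 1 := by rw [← hdeg']; exact hmon.coeff_natDegree
    have hc1 : P.coeff (m + 1) = 0 := by rw [← h1, hm]; norm_num
    have hc0 : P.coeff m = 2 ^ j * c := by rw [← h2, hm]; norm_num
    have hczero : ∀ i, m + 2 < i → P.coeff i = 0 := by
      intro i hi
      exact coeff_eq_zero_of_natDegree_lt (by omega)
    have hsqmon : (P * P).Monic := hmon.mul hmon
    have hsqdeg : (P * P).natDegree = 2 * m + 4 := by
      rw [hmon.natDegree_mul hmon, hdeg']; ring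
    have hm2 : (2 : ℕ) ^ (j + 1 + 1) = 2 * m + 4 := by
      rw [pow_succ, hm]; ring
    rw [polyIter_sq, ← hP, hm2]
    have hCdeg : (C c).natDegree = 0 := natDegree_C c
    have hmon' : (P * P + C c).Monic := by
      apply hsqmon.add_of_left
      refine lt_of_le_of_lt degree_C_le ?_
      exact natDegree_pos_iff_degree_pos.mp (by rw [hsqdeg]; omega)
    refine ⟨hmon', ?_, ?_, ?_⟩
    · rw [natDegree_add_C, hsqdeg]
    · -- coefficient at 2m+3
      rw [show 2 * m + 4 - 1 = 2 * m + 3 by omega, coeff_add, coeff_C, if_neg (by omega),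
        add_zero, coeff_sq]
      apply Finset.sum_eq_zero
      intro i hi
      rw [Finset.mem_range] at hi
      rcases lt_trichotomy i (m + 1) with h | h | h
      · rw [hczero (2 * m + 3 - i) (by omega), mul_zero]
      · rw [h, hc1, zero_mul]
      · rcases eq_or_lt_of_le (Nat.succ_le_of_lt h) with h2 | h2
        · rw [← h2, show 2 * m + 3 - (m + 2) = m + 1 by omega, hc1, mul_zero]
        · rw [hczero i (by omega), zero_mul]
    · -- coefficient at 2m+2
      rw [show 2 * m + 4 - 2 = 2 * m + 2 by omega, coeff_add, coeff_C, if_neg (by omega),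
        add_zero, coeff_sq]
      have hsub : ∑ i ∈ Finset.range (2 * m + 3), P.coeff i * P.coeff (2 * m + 2 - i)
          = ∑ i ∈ ({m, m + 1, m + 2} : Finset ℕ), P.coeff i * P.coeff (2 * m + 2 - i) := by
        apply (Finset.sum_subset ?_ ?_).symm
        · intro i hi
          simp only [Finset.mem_insert, Finset.mem_singleton] at hi
          rw [Finset.mem_range]; omega
        · intro i _ hni
          simp only [Finset.mem_insert, Finset.mem_singleton] at hni
          push_neg at hni
          rcases lt_or_ge i m with h | h
          · rw [hczero (2 * m + 2 - i) (by omega), mul_zero]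
          · rw [hczero i (by omega), zero_mul]
      rw [hsub]
      rw [show ({m, m + 1, m + 2} : Finset ℕ) = insert m (insert (m + 1) {m + 2}) from rfl,
        Finset.sum_insert (by simp only [Finset.mem_insert, Finset.mem_singleton]; omega),
        Finset.sum_insert (by simp only [Finset.mem_singleton]; omega),
        Finset.sum_singleton]
      rw [show 2 * m + 2 - m = m + 2 by omega, show 2 * m + 2 - (m + 1) = m + 1 by omega,
        show 2 * m + 2 - (m + 2) = m by omega]
      rw [hc0, hc1, hc2]
      ring

/-- For `c ≠ 0` and `n ≥ 2`, there is no affine map `σ(z) = az + b` with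
`φ_c^{∘(n-1)} = -φ_c^{∘(n-1)} ∘ σ`. -/
theorem stmt6 (c : ℂ) (hc : c ≠ 0) (n : ℕ) (hn : 2 ≤ n) :
    ¬ ∃ a b : ℂ, a ≠ 0 ∧
      polyIter (X ^ 2 + C c) (n - 1)
        = -((polyIter (X ^ 2 + C c) (n - 1)).comp (C a * X + C b)) := by
  rintro ⟨a, b, ha, heq⟩
  obtain ⟨j, hj⟩ : ∃ j, n - 1 = j + 1 := ⟨n - 2, by omega⟩
  rw [hj] at heq
  obtain ⟨hmon, hdeg, h1, h2⟩ := iter_facts c j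
  set P := polyIter (X ^ 2 + C c) (j + 1) with hP
  obtain ⟨m, hm⟩ : ∃ m, 2 ^ (j + 1) = m + 2 := by
    refine ⟨2 ^ (j + 1) - 2, ?_⟩
    have : 2 ≤ 2 ^ (j + 1) := by
      calc 2 = 2 ^ 1 := rfl
      _ ≤ 2 ^ (j + 1) := Nat.pow_le_pow_right (by norm_num) (by omega)
    omega
  have hdeg' : P.natDegree = m + 2 := by rw [hdeg, hm]
  have hc2 : P.coeff (m + 2) = 1 := by rw [← hdeg']; exact hmon.coeff_natDegree
  have hc1 : P.coeff (m + 1) = 0 := by rw [← h1, hm]; norm_num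
  have hc0 : P.coeff m = 2 ^ j * c := by rw [← h2, hm]; norm_num
  set σ : ℂ[X] := C a * X + C b with hσ
  have hcomp : ∀ t, (P.comp σ).coeff t
      = ∑ i ∈ Finset.range (m + 3), P.coeff i * ((i.choose t : ℂ) * a ^ t * b ^ (i - t)) := by
    intro t
    have : P.comp σ = ∑ i ∈ Finset.range (P.natDegree + 1), C (P.coeff i) * σ ^ i :=
      eval₂_eq_sum_range C σ
    rw [this, hdeg', finset_sum_coeff]
    apply Finset.sum_congr rfl
    intro i _
    rw [coeff_C_mul, coeff_linear_pow]
  -- coefficient at m+2 : 1 = -(a^(m+2))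
  have e2 : (1 : ℂ) = -(a ^ (m + 2)) := by
    have := congrArg (fun q : ℂ[X] => q.coeff (m + 2)) heq
    simp only [coeff_neg] at this
    rw [hc2, hcomp] at this
    rw [Finset.sum_range_succ, Finset.sum_eq_zero (fun i hi => by
      rw [Finset.mem_range] at hi
      rw [Nat.choose_eq_zero_of_lt (by omega)]
      push_cast; ring)] at this
    rw [hc2, Nat.choose_self, Nat.sub_self] at this
    push_cast at this
    simpa using this
  -- coefficient at m+1 : b = 0
  have hb : b = 0 := by
    have this := congrArg (fun q : ℂ[X] => q.coeff (m + 1)) heq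
    simp only [coeff_neg] at this
    rw [hc1, hcomp] at this
    rw [Finset.sum_range_succ, Finset.sum_range_succ, Finset.sum_eq_zero (fun i hi => by
      rw [Finset.mem_range] at hi
      rw [Nat.choose_eq_zero_of_lt (by omega)]
      push_cast; ring)] at this
    rw [hc1, hc2, Nat.choose_self, Nat.sub_self, pow_zero, Nat.choose_succ_self_right,
      show m + 2 - (m + 1) = 1 by omega, pow_one] at this
    push_cast at this
    have key : ((m : ℂ) + 2) * a ^ (m + 1) * b = 0 := by linear_combination this
    have hm2 : ((m : ℂ) + 2) ≠ 0 := by exact_mod_cast (show (m + 2 : ℕ) ≠ 0 by omega)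
    have hne : ((m : ℂ) + 2) * a ^ (m + 1) ≠ 0 := mul_ne_zero hm2 (pow_ne_zero _ ha)
    exact (mul_eq_zero.mp key).resolve_left hne
  -- coefficient at m : a^m = -1
  have ham : a ^ m = -1 := by
    have this := congrArg (fun q : ℂ[X] => q.coeff m) heq
    simp only [coeff_neg] at this
    rw [hc0, hcomp] at this
    rw [Finset.sum_range_succ, Finset.sum_range_succ, Finset.sum_range_succ,
      Finset.sum_eq_zero (fun i hi => by
        rw [Finset.mem_range] at hi
        rw [Nat.choose_eq_zero_of_lt (by omega)]
        push_cast; ring)] at this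
    rw [hc0, hc1, hc2, Nat.choose_self, Nat.sub_self, pow_zero, hb,
      show m + 1 - m = 1 by omega, show m + 2 - m = 2 by omega] at this
    push_cast at this
    have e0 : (2 : ℂ) ^ j * c * a ^ m = -(2 ^ j * c) := by linear_combination this
    have h2jc : (2 : ℂ) ^ j * c ≠ 0 := mul_ne_zero (pow_ne_zero _ (by norm_num)) hc
    have : (2 : ℂ) ^ j * c * a ^ m = 2 ^ j * c * (-1) := by rw [e0]; ring
    exact mul_left_cancel₀ h2jc this
  -- contradiction
  have hm2neg : a ^ (m + 2) = -1 := by linear_combination e2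
  have ha2 : a ^ 2 = 1 := by
    have h' : a ^ m * a ^ 2 = -1 := by rw [← pow_add]; exact hm2neg
    rw [ham] at h'
    linear_combination -h'
  have hpos : a ^ (m + 2) = 1 := by
    rw [show m + 2 = 2 * 2 ^ j by rw [← hm, pow_succ]; ring, pow_mul, ha2, one_pow]
  rw [hm2neg] at hpos
  norm_num at hpos
end

section
/- Let F(z) = z³ + az + b with a ≠ 0, and let n ≥ 1. If σ(z) = ez + f is an affine map (e ≠ 0) with F^{∘n} ∘ σ = F^{∘n}, then e = 1 and f = 0, i.e., σ is the identity. -/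
open Polynomial

lemma coeff_comp_C_mul_X (p : ℂ[X]) (e : ℂ) (k : ℕ) :
    (p.comp (C e * X)).coeff k = p.coeff k * e ^ k := by
  rw [comp_eq_sum_left, Polynomial.sum, finset_sum_coeff]
  simp only [mul_pow, ← C_pow, ← mul_assoc, ← C_mul, coeff_C_mul, coeff_X_pow, mul_ite, mul_one,
    mul_zero]
  rw [Finset.sum_ite_eq p.support k]
  split_ifs with hk
  · ring
  · simp [Polynomial.notMem_support_iff.mp hk]

lemma iter_form (a b : ℂ) (n : ℕ) (hn : 1 ≤ n) :
    ∃ q : ℂ[X], polyIter (X ^ 3 + C a * X + C b) n = X ^ (3 ^ n) + q ∧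
      q.natDegree ≤ 3 ^ n - 2 ∧ q.coeff (3 ^ n - 2) = 3 ^ (n - 1) * a := by
  induction n, hn using Nat.le_induction with
  | base =>
    refine ⟨C a * X + C b, ?_, ?_, ?_⟩
    · simp [polyIter, add_assoc]
    · exact natDegree_linear_le
    · simp
  | succ n hn IH =>
    obtain ⟨q, hPq, hqdeg, hqc⟩ := IH
    set D := 3 ^ n with hDdef
    have hD : 3 ≤ D := by
      calc (3:ℕ) = 3 ^ 1 := by norm_num
      _ ≤ 3 ^ n := Nat.pow_le_pow_right (by norm_num) hn
    refine ⟨C 3 * ((X ^ D) ^ 2 * q) + C 3 * (X ^ D * q ^ 2) + q ^ 3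
      + C a * X ^ D + C a * q + C b, ?_, ?_, ?_⟩
    · have hstep : polyIter (X ^ 3 + C a * X + C b) (n + 1)
          = (X ^ 3 + C a * X + C b).comp (polyIter (X ^ 3 + C a * X + C b) n) := by
        simp [polyIter, Function.iterate_succ_apply']
      rw [hstep, hPq, show (3:ℕ) ^ (n + 1) = D * 3 by rw [pow_succ], pow_mul]
      simp only [add_comp, mul_comp, pow_comp, X_comp, C_comp]
      simp only [map_ofNat]
      ring
    · rw [show (3:ℕ) ^ (n + 1) = D * 3 by rw [pow_succ]]
      have h1 : (C (3:ℂ) * ((X ^ D) ^ 2 * q)).natDegree ≤ D * 3 - 2 := by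
        refine natDegree_C_mul_le _ _ |>.trans ?_
        refine (natDegree_mul_le).trans ?_
        have := natDegree_pow_le (p := (X : ℂ[X]) ^ D) (n := 2)
        have hx : ((X : ℂ[X]) ^ D).natDegree = D := natDegree_X_pow D
        omega
      have h2 : (C (3:ℂ) * (X ^ D * q ^ 2)).natDegree ≤ D * 3 - 2 := by
        refine natDegree_C_mul_le _ _ |>.trans ?_
        refine (natDegree_mul_le).trans ?_
        have := natDegree_pow_le (p := q) (n := 2)
        have hx : ((X : ℂ[X]) ^ D).natDegree = D := natDegree_X_pow D
        omega
      have h3 : (q ^ 3).natDegree ≤ D * 3 - 2 := by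
        have := natDegree_pow_le (p := q) (n := 3)
        omega
      have h4 : (C a * X ^ D).natDegree ≤ D * 3 - 2 := by
        refine natDegree_C_mul_le _ _ |>.trans ?_
        have hx : ((X : ℂ[X]) ^ D).natDegree = D := natDegree_X_pow D
        omega
      have h5 : (C a * q).natDegree ≤ D * 3 - 2 := by
        refine natDegree_C_mul_le _ _ |>.trans ?_
        omega
      have h6 : (C b : ℂ[X]).natDegree ≤ D * 3 - 2 := by
        simp
      exact (natDegree_add_le_of_le (natDegree_add_le_of_le (natDegree_add_le_of_le
        (natDegree_add_le_of_le (natDegree_add_le_of_le h1 h2) h3) h4) h5) h6).trans (by simp)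
    · rw [show (3:ℕ) ^ (n + 1) = D * 3 by rw [pow_succ]]
      have hc1 : (C (3:ℂ) * ((X ^ D) ^ 2 * q)).coeff (D * 3 - 2) = 3 * q.coeff (D - 2) := by
        rw [← pow_mul, coeff_C_mul, show D * 3 - 2 = (D - 2) + D * 2 by omega,
          coeff_X_pow_mul]
      have hc2 : (C (3:ℂ) * (X ^ D * q ^ 2)).coeff (D * 3 - 2) = 0 := by
        rw [coeff_C_mul]
        have : (X ^ D * q ^ 2 : ℂ[X]).natDegree < D * 3 - 2 := by
          have h2 := natDegree_mul_le (p := (X : ℂ[X]) ^ D) (q := q ^ 2)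
          have := natDegree_pow_le (p := q) (n := 2)
          have hx : ((X : ℂ[X]) ^ D).natDegree = D := natDegree_X_pow D
          omega
        rw [coeff_eq_zero_of_natDegree_lt this, mul_zero]
      have hc3 : (q ^ 3 : ℂ[X]).coeff (D * 3 - 2) = 0 := by
        refine coeff_eq_zero_of_natDegree_lt ?_
        have := natDegree_pow_le (p := q) (n := 3)
        omega
      have hc4 : (C a * X ^ D).coeff (D * 3 - 2) = 0 := by
        refine coeff_eq_zero_of_natDegree_lt ?_
        have := natDegree_C_mul_le a ((X : ℂ[X]) ^ D)
        have hx : ((X : ℂ[X]) ^ D).natDegree = D := natDegree_X_pow D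
        omega
      have hc5 : (C a * q).coeff (D * 3 - 2) = 0 := by
        refine coeff_eq_zero_of_natDegree_lt ?_
        have := natDegree_C_mul_le a q
        omega
      have hc6 : (C b : ℂ[X]).coeff (D * 3 - 2) = 0 := by
        rw [coeff_C, if_neg (by omega)]
      simp only [coeff_add, hc1, hc2, hc3, hc4, hc5, hc6, hqc]
      rw [show n + 1 - 1 = (n - 1) + 1 by omega, pow_succ]
      ring

/-- For `F(z) = z³ + az + b` with `a ≠ 0` and `n ≥ 1`: any affine
`σ(z) = ez + f` with `F^{∘n} ∘ σ = F^{∘n}` is the identity. -/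
theorem stmt8 (a b : ℂ) (ha : a ≠ 0) (n : ℕ) (hn : 1 ≤ n) (e f : ℂ) (he : e ≠ 0)
    (h : (polyIter (X ^ 3 + C a * X + C b) n).comp (C e * X + C f)
        = polyIter (X ^ 3 + C a * X + C b) n) :
    e = 1 ∧ f = 0 := by
  obtain ⟨q, hPq, hqdeg, hqc⟩ := iter_form a b n hn
  set P := polyIter (X ^ 3 + C a * X + C b) n with hPdef
  set d := 3 ^ n with hddef
  have hd : 3 ≤ d := by
    calc (3:ℕ) = 3 ^ 1 := by norm_num
    _ ≤ 3 ^ n := Nat.pow_le_pow_right (by norm_num) hn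
  -- rewrite the composition as a two-step composition
  have hcmp : (X + C f).comp (C e * X) = C e * X + C f := by simp
  rw [← hcmp, ← comp_assoc] at h
  -- coefficients of P
  have hPcoeff : ∀ k, P.coeff k = ((X : ℂ[X]) ^ d).coeff k + q.coeff k := by
    intro k; rw [hPq, coeff_add]
  have hq1 : q.coeff d = 0 := coeff_eq_zero_of_natDegree_lt (by omega)
  have hq2 : q.coeff (d - 1) = 0 := coeff_eq_zero_of_natDegree_lt (by omega)
  -- coefficients of T = P.comp (X + C f)
  have hT : P.comp (X + C f) = (X + C f) ^ d + q.comp (X + C f) := by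
    rw [hPq, add_comp, X_pow_comp]
  have hTq : (q.comp (X + C f)).natDegree ≤ d - 2 := by
    rw [natDegree_comp, natDegree_X_add_C, mul_one]; exact hqdeg
  -- coefficient at d : e^d = 1
  have hed : e ^ d = 1 := by
    have := congrArg (fun p => coeff p d) h
    simp only [coeff_comp_C_mul_X, hT, coeff_add, coeff_X_add_C_pow] at this
    rw [Nat.sub_self, pow_zero, Nat.choose_self, Nat.cast_one, one_mul,
      coeff_eq_zero_of_natDegree_lt (lt_of_le_of_lt hTq (by omega)), add_zero,
      hPcoeff, coeff_X_pow, if_pos rfl, hq1, add_zero] at this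
    simpa using this
  -- coefficient at d - 1 : f = 0
  have hf : f = 0 := by
    have := congrArg (fun p => coeff p (d - 1)) h
    simp only [coeff_comp_C_mul_X, hT, coeff_add, coeff_X_add_C_pow] at this
    rw [show d - (d - 1) = 1 by omega, pow_one,
      show d.choose (d - 1) = d by
        rw [Nat.choose_symm (by omega : 1 ≤ d), Nat.choose_one_right],
      coeff_eq_zero_of_natDegree_lt (lt_of_le_of_lt hTq (by omega)), add_zero,
      hPcoeff, coeff_X_pow, if_neg (by omega), hq2, add_zero] at this
    have hdne : (d : ℂ) ≠ 0 := by
      simp only [Nat.cast_ne_zero]; omega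
    have hene : e ^ (d - 1) ≠ 0 := pow_ne_zero _ he
    have h0 : f * (d : ℂ) = 0 := ((mul_eq_zero.mp this).resolve_right hene)
    exact (mul_eq_zero.mp h0).resolve_right hdne
  subst hf
  -- with f = 0, coefficient at d - 2 : e^(d-2) = 1
  rw [C_0, add_zero, comp_X] at h
  have hPc2 : P.coeff (d - 2) = 3 ^ (n - 1) * a := by
    rw [hPcoeff, coeff_X_pow, if_neg (by omega), hqc, zero_add]
  have hed2 : e ^ (d - 2) = 1 := by
    have := congrArg (fun p => coeff p (d - 2)) h
    simp only [coeff_comp_C_mul_X, hPc2] at this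
    have hne : (3 : ℂ) ^ (n - 1) * a ≠ 0 := mul_ne_zero (pow_ne_zero _ (by norm_num)) ha
    exact mul_left_cancel₀ hne (this.trans (mul_one _).symm)
  have he2 : e ^ 2 = 1 := by
    have h2 : e ^ (d - 2) * e ^ 2 = 1 := by
      rw [← pow_add, show d - 2 + 2 = d by omega]; exact hed
    rwa [hed2, one_mul] at h2
  obtain ⟨k, hk⟩ : Odd d := Odd.pow (by decide)
  have : e = e ^ d := by
    rw [hk, pow_succ, pow_mul, he2, one_pow, one_mul]
  exact ⟨this.trans hed, rfl⟩
end
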